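/- For n ≥ 3, let F(z) = f(x_1) + Σ_{0<j<j+k≤n} x_j x_k x_n^{n-j-k} with x_j = Re z_j, and consider the Levi-form matrix H (the Hessian of F in x_1,…,x_n). Writing det H as a polynomial in x_n, the vanishing of det H identically, for a defining coefficient matrix S (generalizing to F_S(z) = Σ S_{j,k} x_j x_k x_n^{n-j-k}), determines the coefficients {S_{j,k} : j+k ≤ n-2-m} recursively from {S_{j,k} : j+k > n-2-m} for each m ≥ 0. In the special case S_{j,k} = 1 for all j+k ≤ n, the identity det H = 0 holds identically in (x_1,…,x_n) when f = 0. -/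

import Mathlib

/-!
In the variables `p = (x_1, …, x_{n-1})` and `T = x_n` the function is `Φ = Σ_{j,k} x_j x_k A_{jk}(T)`
with `A_{jk} = T^{n-j-k}` for `j + k ≤ n`, so the Hessian kills `v = (w, -1)` iff `A w = A' p`
(the first `n - 1` rows) and `2 pᵀ A' w = pᵀ A'' p` (the last row). With the Horner polynomials
`h_m = Σ_{i ≤ m} x_i T^{m-i}` one has `(A p)_k = h_{n-k}` and `h_m' = Σ_{b < m} T^{m-1-b} h_b`,
which is the first condition for `w_{b+1} = h_b(T)`. The same identity gives
`(pᵀ A p)' = Σ_{b+c = n-1} h_b h_c`, and differentiating once more gives the second condition.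
-/

open scoped BigOperators

/-- Hessian matrix of a function on `ℝⁿ` with respect to the standard basis. -/
noncomputable def hess {n : ℕ} (Φ : (Fin n → ℝ) → ℝ) (x : Fin n → ℝ) :
    Matrix (Fin n) (Fin n) ℝ :=
  fun j k => fderiv ℝ (fun y => fderiv ℝ Φ y (Pi.single k 1)) x (Pi.single j 1)

open Polynomial Finset Matrix

section Horner
variable {R : Type*} [CommSemiring R] (c : ℕ → R)

noncomputable def hornerPoly (M : ℕ) : R[X] :=
  ∑ i ∈ range M, C (c i) * X ^ (M - 1 - i)

@[simp] lemma hornerPoly_zero : hornerPoly c 0 = 0 := by simp [hornerPoly]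

lemma hornerPoly_succ (M : ℕ) : hornerPoly c (M + 1) = X * hornerPoly c M + C (c M) := by
  rw [hornerPoly, sum_range_succ, hornerPoly, mul_sum]
  congr 1
  · refine sum_congr rfl fun i hi => ?_
    rw [mul_left_comm, ← pow_succ', show M + 1 - 1 - i = M - 1 - i + 1 by grind]
  · simp

lemma hornerPoly_congr {c d : ℕ → R} {M : ℕ} (h : ∀ i < M, c i = d i) :
    hornerPoly c M = hornerPoly d M :=
  sum_congr rfl fun i hi => by rw [h i (mem_range.1 hi)]

lemma derivative_hornerPoly (M : ℕ) :
    derivative (hornerPoly c M) = ∑ b ∈ range M, X ^ (M - 1 - b) * hornerPoly c b := by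
  induction M with
  | zero => simp
  | succ M ih =>
    rw [hornerPoly_succ, derivative_add, derivative_mul, ih, derivative_C, derivative_X,
      sum_range_succ, mul_sum]
    simp only [Nat.add_sub_cancel, Nat.sub_self, pow_zero, one_mul, add_zero]
    rw [add_comm]
    congr 1
    refine sum_congr rfl fun b hb => ?_
    rw [← mul_assoc, ← pow_succ', show M - b = M - 1 - b + 1 by grind]

lemma eval_hornerPoly_eval_hornerPoly (t : R) (M : ℕ) :
    (hornerPoly (fun i => (hornerPoly c i).eval t) M).eval t =
      (derivative (hornerPoly c M)).eval t := by
  rw [derivative_hornerPoly, hornerPoly]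
  simp only [eval_finsetSum, eval_mul, eval_C, eval_pow, eval_X]
  exact sum_congr rfl fun i _ => mul_comm _ _

lemma derivative_sum_C_mul_hornerPoly (n : ℕ) :
    derivative (∑ k ∈ range n, C (c k) * hornerPoly c (n - 1 - k)) =
      ∑ b ∈ range n, hornerPoly c b * hornerPoly c (n - 1 - b) := by
  simp only [derivative_sum, derivative_C_mul, derivative_hornerPoly, mul_sum]
  rw [sum_comm' (t' := range n) (s' := fun b => range (n - 1 - b)) (fun k b => by
    simp only [mem_range]; omega)]
  refine sum_congr rfl fun b _ => ?_
  set h := hornerPoly c b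
  rw [hornerPoly, mul_sum]
  refine sum_congr rfl fun k _ => ?_
  rw [show n - 1 - k - 1 - b = n - 1 - b - 1 - k by omega]
  ring

lemma derivative_sum_hornerPoly_mul (n : ℕ) :
    derivative (∑ b ∈ range n, hornerPoly c b * hornerPoly c (n - 1 - b)) =
      2 * ∑ b ∈ range n, hornerPoly c b * derivative (hornerPoly c (n - 1 - b)) := by
  simp only [derivative_sum, derivative_mul, sum_add_distrib, two_mul]
  congr 1
  rw [← sum_range_reflect]
  refine sum_congr rfl fun b hb => ?_
  rw [Nat.sub_sub_self (by simp at hb; omega), mul_comm]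

end Horner

section PolyBilin
variable {ι : Type*} [Fintype ι]

noncomputable def polyBilin (P : ι → ι → ℝ[X]) (u w : ι → ℝ) : ℝ[X] :=
  ∑ j, ∑ k, C (u j * w k) * P j k

lemma eval_polyBilin (P : ι → ι → ℝ[X]) (u w : ι → ℝ) (t : ℝ) :
    (polyBilin P u w).eval t = ∑ j, ∑ k, u j * w k * (P j k).eval t := by
  simp [polyBilin, eval_finsetSum]

lemma derivative_polyBilin (P : ι → ι → ℝ[X]) (u w : ι → ℝ) :
    derivative (polyBilin P u w) = polyBilin (fun j k => derivative (P j k)) u w := by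
  simp [polyBilin]

lemma polyBilin_comm {P : ι → ι → ℝ[X]} (hP : ∀ j k, P j k = P k j) (u w : ι → ℝ) :
    polyBilin P u w = polyBilin P w u := by
  rw [polyBilin, sum_comm]
  simp_rw [hP, mul_comm (u _)]
  rfl

lemma polyBilin_eq_sum (P : ι → ι → ℝ[X]) (u w : ι → ℝ) :
    polyBilin P u w = ∑ k, C (w k) * ∑ j, C (u j) * P j k := by
  simp only [polyBilin, mul_sum, C_mul, mul_assoc]
  rw [sum_comm]
  exact sum_congr rfl fun j _ => sum_congr rfl fun k _ => by ring

variable {E : Type*} [NormedAddCommGroup E] [NormedSpace ℝ E]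

lemma hasFDerivAt_eval_polyBilin (P : ι → ι → ℝ[X]) {f g : E → ι → ℝ} {t : E → ℝ}
    {f' g' : E →L[ℝ] ι → ℝ} {t' : E →L[ℝ] ℝ} {y : E} (hf : HasFDerivAt f f' y)
    (hg : HasFDerivAt g g' y) (ht : HasFDerivAt t t' y) :
    HasFDerivAt (fun y => (polyBilin P (f y) (g y)).eval (t y))
      (∑ j, ∑ k, ((g y k * (P j k).eval (t y)) • (ContinuousLinearMap.proj j).comp f'
        + (f y j * (P j k).eval (t y)) • (ContinuousLinearMap.proj k).comp g'
        + (f y j * g y k * (derivative (P j k)).eval (t y)) • t')) y := by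
  simp only [eval_polyBilin]
  refine HasFDerivAt.fun_sum fun j _ => HasFDerivAt.fun_sum fun k _ => ?_
  have hfj := (hasFDerivAt_apply j (f y)).comp y hf
  have hgk := (hasFDerivAt_apply k (g y)).comp y hg
  have hP := ((P j k).hasDerivAt (t y)).comp_hasFDerivAt y ht
  refine ((hfj.fun_mul hgk).fun_mul hP).congr_fderiv ?_
  ext u
  simp only [Function.comp_apply, smul_add, _root_.add_apply, _root_.smul_apply, smul_eq_mul,
    ContinuousLinearMap.comp_apply, ContinuousLinearMap.proj_apply]
  ring

lemma fderiv_eval_polyBilin_apply (P : ι → ι → ℝ[X]) {f g : E → ι → ℝ} {t : E → ℝ} {y : E}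
    (hf : DifferentiableAt ℝ f y) (hg : DifferentiableAt ℝ g y) (ht : DifferentiableAt ℝ t y)
    (u : E) :
    fderiv ℝ (fun y => (polyBilin P (f y) (g y)).eval (t y)) y u =
      (polyBilin P (fderiv ℝ f y u) (g y) + polyBilin P (f y) (fderiv ℝ g y u)).eval (t y)
        + fderiv ℝ t y u * (polyBilin (fun j k => derivative (P j k)) (f y) (g y)).eval (t y) := by
  rw [(hasFDerivAt_eval_polyBilin P hf.hasFDerivAt hg.hasFDerivAt ht.hasFDerivAt).fderiv]
  simp only [sum_add_distrib, _root_.add_apply, _root_.sum_apply, _root_.smul_apply,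
    ContinuousLinearMap.comp_apply, ContinuousLinearMap.proj_apply, smul_eq_mul, eval_add,
    eval_polyBilin, mul_sum]
  congr 1
  congr 1
  all_goals exact sum_congr rfl fun j _ => sum_congr rfl fun k _ => by ring

lemma contDiff_eval_polyBilin (P : ι → ι → ℝ[X]) {m : WithTop ℕ∞} {f g : E → ι → ℝ} {t : E → ℝ}
    (hf : ContDiff ℝ m f) (hg : ContDiff ℝ m g) (ht : ContDiff ℝ m t) :
    ContDiff ℝ m (fun y => (polyBilin P (f y) (g y)).eval (t y)) := by
  have hP (p : ℝ[X]) : ContDiff ℝ m (fun s : ℝ => p.eval s) := by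
    simpa using p.contDiff_aeval (R := ℝ) (𝕜 := ℝ) m
  simp only [eval_polyBilin]
  fun_prop

lemma fderiv_eval_polyBilin_self_apply {P : ι → ι → ℝ[X]} (hP : ∀ j k, P j k = P k j) (N : ι)
    (y u : ι → ℝ) :
    fderiv ℝ (fun y => (polyBilin P y y).eval (y N)) y u =
      2 * (polyBilin P u y).eval (y N)
        + u N * (polyBilin (fun j k => derivative (P j k)) y y).eval (y N) := by
  rw [fderiv_eval_polyBilin_apply P (f := fun y => y) (g := fun y => y) differentiableAt_id
    differentiableAt_id (differentiableAt_apply N y), (hasFDerivAt_apply N y).fderiv, fderiv_fun_id]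
  simp only [ContinuousLinearMap.coe_id', id_eq, polyBilin_comm hP y u, eval_add,
    ContinuousLinearMap.proj_apply]
  ring

lemma fderiv_eval_polyBilin_const_left_apply (P : ι → ι → ℝ[X]) (N : ι) (a y u : ι → ℝ) :
    fderiv ℝ (fun y => (polyBilin P a y).eval (y N)) y u =
      (polyBilin P a u).eval (y N)
        + u N * (polyBilin (fun j k => derivative (P j k)) a y).eval (y N) := by
  rw [fderiv_eval_polyBilin_apply P (g := fun y => y) (differentiableAt_const a)
    differentiableAt_id (differentiableAt_apply N y), (hasFDerivAt_apply N y).fderiv, fderiv_fun_id,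
    fderiv_fun_const]
  simp [polyBilin]

end PolyBilin

theorem hess_mulVec {n : ℕ} {Φ : (Fin n → ℝ) → ℝ} (hΦ : ContDiff ℝ 2 Φ) (x v : Fin n → ℝ) :
    hess Φ x *ᵥ v = fun a => fderiv ℝ (fun y => fderiv ℝ Φ y v) x (Pi.single a 1) := by
  have hD : Differentiable ℝ (fderiv ℝ Φ) :=
    (hΦ.fderiv_right (m := 1) le_rfl).differentiable one_ne_zero
  ext a
  simp only [Matrix.mulVec, dotProduct, hess, fderiv_clm_apply (hD x) (differentiableAt_const _)]
  simp only [fderiv_fun_const, Pi.zero_apply, ContinuousLinearMap.comp_zero, zero_add,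
    ContinuousLinearMap.flip_apply]
  conv_rhs => rw [← Finset.univ_sum_single v, map_sum]
  refine sum_congr rfl fun b _ => ?_
  rw [mul_comm, ← smul_eq_mul, ← map_smul, ← Pi.single_smul, smul_eq_mul, mul_one]

lemma hess_eval_polyBilin_mulVec {n : ℕ} {P : Fin n → Fin n → ℝ[X]} (hP : ∀ j k, P j k = P k j)
    (N : Fin n) (x v : Fin n → ℝ) (a : Fin n) :
    (hess (fun y => (polyBilin P y y).eval (y N)) x *ᵥ v) a =
      2 * ((polyBilin P v (Pi.single a 1)).eval (x N)
          + v N * (polyBilin (fun j k => derivative (P j k)) (Pi.single a 1) x).eval (x N))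
        + (Pi.single a 1 : Fin n → ℝ) N
          * (2 * (polyBilin (fun j k => derivative (P j k)) v x).eval (x N)
            + v N * (polyBilin (fun j k => derivative (derivative (P j k))) x x).eval (x N)) := by
  have hP' : ∀ j k, derivative (P j k) = derivative (P k j) := fun j k => by rw [hP]
  have hdiff (Q : Fin n → Fin n → ℝ[X]) {f : (Fin n → ℝ) → Fin n → ℝ} (hf : ContDiff ℝ 1 f) :
      DifferentiableAt ℝ (fun y => (polyBilin Q (f y) y).eval (y N)) x :=
    (contDiff_eval_polyBilin Q hf contDiff_fun_id (contDiff_apply ℝ ℝ N)).differentiable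
      one_ne_zero x
  rw [hess_mulVec (contDiff_eval_polyBilin P contDiff_fun_id contDiff_fun_id (contDiff_apply ℝ ℝ N))]
  simp only [fderiv_eval_polyBilin_self_apply hP]
  rw [fderiv_fun_add ((hdiff P contDiff_const).const_mul 2)
      ((hdiff _ contDiff_fun_id).const_mul _), fderiv_const_mul (hdiff P contDiff_const),
    fderiv_const_mul (hdiff _ contDiff_fun_id)]
  simp only [_root_.add_apply, _root_.smul_apply, smul_eq_mul,
    fderiv_eval_polyBilin_const_left_apply, fderiv_eval_polyBilin_self_apply hP']
  ring

section Model

variable {n : ℕ}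

-- Coordinates are 0-based: `j : Fin n` is `x_{j+1}`, and `X` stands for `x_n`.
noncomputable def modelCoeff (n : ℕ) (j k : Fin n) : ℝ[X] :=
  if (j : ℕ) + k + 2 ≤ n then X ^ (n - 2 - j - k) else 0

lemma modelCoeff_comm (j k : Fin n) : modelCoeff n j k = modelCoeff n k j := by
  simp only [modelCoeff, add_comm (j : ℕ), Nat.sub_right_comm (n - 2) (j : ℕ)]

lemma sum_C_mul_modelCoeff (u : Fin n → ℝ) (k : Fin n) :
    ∑ j, C (u j) * modelCoeff n j k = hornerPoly (Function.extend Fin.val u 0) (n - 1 - k) := by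
  let f (i : ℕ) : ℝ[X] :=
    if i + k + 2 ≤ n then C (Function.extend Fin.val u 0 i) * X ^ (n - 2 - i - k) else 0
  have hf (j : Fin n) : C (u j) * modelCoeff n j k = f j := by
    simp only [modelCoeff, f, mul_ite, mul_zero, Fin.val_injective.extend_apply]
  rw [sum_congr rfl fun j _ => hf j, Fin.sum_univ_eq_sum_range f, ← sum_filter, hornerPoly]
  have hr : (range n).filter (fun i => i + k + 2 ≤ n) = range (n - 1 - k) := by
    ext i; simp only [mem_filter, mem_range]; omega
  rw [hr]
  refine sum_congr rfl fun i hi => ?_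
  rw [Nat.sub_right_comm (n - 2), show n - 2 - k - i = n - 1 - k - 1 - i by omega]

noncomputable def modelKernelVec (x : Fin n → ℝ) (t : ℝ) : Fin n → ℝ := fun b =>
  if (b : ℕ) + 1 = n then -1 else (hornerPoly (Function.extend Fin.val x 0) b).eval t

lemma eval_polyBilin_modelKernelVec_left (x u : Fin n → ℝ) (t : ℝ) :
    (polyBilin (modelCoeff n) (modelKernelVec x t) u).eval t =
      (polyBilin (fun j k => derivative (modelCoeff n j k)) x u).eval t := by
  rw [polyBilin_eq_sum, polyBilin_eq_sum, eval_finsetSum, eval_finsetSum]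
  refine sum_congr rfl fun k _ => ?_
  rw [eval_mul, eval_mul]
  congr 1
  have hd : ∑ j, C (x j) * derivative (modelCoeff n j k)
      = derivative (∑ j, C (x j) * modelCoeff n j k) := by
    simp only [derivative_sum, derivative_C_mul]
  rw [hd, sum_C_mul_modelCoeff, sum_C_mul_modelCoeff, ← eval_hornerPoly_eval_hornerPoly]
  congr 1
  refine hornerPoly_congr fun i hi => ?_
  have hi' : i < n := by omega
  rw [show i = ((⟨i, hi'⟩ : Fin n) : ℕ) from rfl, Fin.val_injective.extend_apply, modelKernelVec,
    if_neg (by simp only; omega)]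

lemma two_mul_eval_polyBilin_modelKernelVec_left (x : Fin n → ℝ) (t : ℝ) :
    2 * (polyBilin (fun j k => derivative (modelCoeff n j k)) (modelKernelVec x t) x).eval t =
      (polyBilin (fun j k => derivative (derivative (modelCoeff n j k))) x x).eval t := by
  set c := Function.extend Fin.val x 0
  have hx : ∑ k, C (x k) * hornerPoly c (n - 1 - k)
      = ∑ k ∈ range n, C (c k) * hornerPoly c (n - 1 - k) := by
    rw [← Fin.sum_univ_eq_sum_range (fun k => C (c k) * hornerPoly c (n - 1 - k))]
    simp only [c, Fin.val_injective.extend_apply]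
  rw [← derivative_polyBilin, ← derivative_polyBilin, ← derivative_polyBilin,
    polyBilin_comm modelCoeff_comm, polyBilin_eq_sum, polyBilin_eq_sum]
  simp only [sum_C_mul_modelCoeff]
  rw [hx, derivative_sum_C_mul_hornerPoly, derivative_sum_hornerPoly_mul]
  simp only [derivative_sum, derivative_C_mul, eval_finsetSum, eval_mul, eval_C, eval_ofNat]
  congr 1
  rw [← Fin.sum_univ_eq_sum_range (fun b => (hornerPoly c b).eval t
    * (derivative (hornerPoly c (n - 1 - b))).eval t)]
  refine sum_congr rfl fun b _ => ?_
  by_cases hb : (b : ℕ) + 1 = n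
  · simp [show n - 1 - b = 0 by omega]
  · simp only [modelKernelVec, if_neg hb, c]

lemma eval_polyBilin_modelCoeff (y : Fin n → ℝ) (t : ℝ) :
    (polyBilin (modelCoeff n) y y).eval t = ∑ j : Fin n, ∑ k : Fin n,
      if (j : ℕ) + (k : ℕ) + 2 ≤ n then y j * y k * t ^ (n - 2 - (j : ℕ) - (k : ℕ)) else 0 := by
  simp only [eval_polyBilin, modelCoeff]
  refine sum_congr rfl fun j _ => sum_congr rfl fun k _ => ?_
  split_ifs <;> simp

lemma hess_model_mulVec_modelKernelVec (N : Fin n) (hN : (N : ℕ) + 1 = n) (x : Fin n → ℝ) :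
    hess (fun y => (polyBilin (modelCoeff n) y y).eval (y N)) x *ᵥ modelKernelVec x (x N) = 0 := by
  ext a
  have hv : modelKernelVec x (x N) N = -1 := if_pos hN
  rw [hess_eval_polyBilin_mulVec modelCoeff_comm, hv,
    polyBilin_comm (fun j k => by rw [modelCoeff_comm]) (Pi.single a 1) x,
    eval_polyBilin_modelKernelVec_left, ← two_mul_eval_polyBilin_modelKernelVec_left, Pi.zero_apply]
  ring

end Model

/-- For the coefficient matrix `S ≡ 1` (and `f = 0`), the determinant of the
Hessian (Levi-form matrix) of `Φ(x) = Σ_{0<j<j+k≤n} x_j x_k x_n^{n-j-k}`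
vanishes identically on `ℝⁿ`.  Indices are 0-based: coordinate `i : Fin n`
is `x_{i+1}`. -/
theorem det_hessian_model_eq_zero (n : ℕ) (hn : 3 ≤ n)
    (Φ : (Fin n → ℝ) → ℝ)
    (hΦ : Φ = fun x => ∑ j : Fin n, ∑ k : Fin n,
      if (j : ℕ) + (k : ℕ) + 2 ≤ n then
        x j * x k * (x ⟨n - 1, by omega⟩) ^ (n - 2 - (j : ℕ) - (k : ℕ)) else 0) :
    ∀ x : Fin n → ℝ, (hess Φ x).det = 0 := by
  intro x
  set N : Fin n := ⟨n - 1, by omega⟩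
  have hΦN : Φ = fun y => (polyBilin (modelCoeff n) y y).eval (y N) := by
    simp only [hΦ, eval_polyBilin_modelCoeff, N]
  rw [hΦN, ← exists_mulVec_eq_zero_iff]
  refine ⟨modelKernelVec x (x N), fun h => ?_, hess_model_mulVec_modelKernelVec N ?_ x⟩
  · simpa [modelKernelVec, N, show n - 1 + 1 = n by omega] using congrFun h N
  · simp only [N]; omega
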